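/- Bicomplex Schwarz inequality: for all X, Y in a free T-module M with bicomplex scalar product, |(X,Y)| ≤ |e1·‖X₁‖‖Y₁‖ + e2·‖X₂‖‖Y₂‖| ≤ √2·‖X‖·‖Y‖, where |·| is the Euclidean norm on T ≅ ℝ⁴ and ‖·‖ the norm induced on M. -/

import Mathlib

/-- Bicomplex numbers `w = z1 + z2·i2` with `z1, z2 ∈ ℂ(i1)`. -/
@[ext] structure Bc where
  z1 : ℂ
  z2 : ℂ

namespace Bc

instance : Add Bc := ⟨fun a b => ⟨a.z1 + b.z1, a.z2 + b.z2⟩⟩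
instance : Mul Bc := ⟨fun a b => ⟨a.z1 * b.z1 - a.z2 * b.z2, a.z1 * b.z2 + a.z2 * b.z1⟩⟩
instance : Neg Bc := ⟨fun a => ⟨-a.z1, -a.z2⟩⟩
instance : Zero Bc := ⟨⟨0, 0⟩⟩
instance : One Bc := ⟨⟨1, 0⟩⟩

@[simp] lemma add_def (a b : Bc) : a + b = ⟨a.z1 + b.z1, a.z2 + b.z2⟩ := rfl
@[simp] lemma mul_def (a b : Bc) :
    a * b = ⟨a.z1 * b.z1 - a.z2 * b.z2, a.z1 * b.z2 + a.z2 * b.z1⟩ := rfl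
@[simp] lemma neg_def (a : Bc) : -a = ⟨-a.z1, -a.z2⟩ := rfl
@[simp] lemma zero_def : (0 : Bc) = ⟨0, 0⟩ := rfl
@[simp] lemma one_def : (1 : Bc) = ⟨1, 0⟩ := rfl

instance : CommRing Bc where
  add_assoc a b c := by ext <;> simp <;> ring
  zero_add a := by ext <;> simp
  add_zero a := by ext <;> simp
  add_comm a b := by ext <;> simp <;> ring
  mul_assoc a b c := by ext <;> simp <;> ring
  one_mul a := by ext <;> simp
  mul_one a := by ext <;> simp
  left_distrib a b c := by ext <;> simp <;> ring
  right_distrib a b c := by ext <;> simp <;> ring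
  mul_comm a b := by ext <;> simp <;> ring
  neg_add_cancel a := by ext <;> simp
  zero_mul a := by ext <;> simp
  mul_zero a := by ext <;> simp
  nsmul := nsmulRec
  zsmul := zsmulRec

/-- The embedding of `ℂ(i1)` into the bicomplex numbers. -/
def ofC (z : ℂ) : Bc := ⟨z, 0⟩

def i1 : Bc := ⟨Complex.I, 0⟩
def i2 : Bc := ⟨0, 1⟩
def j : Bc := i1 * i2

/-- idempotent `e1 = (1+j)/2`. -/
noncomputable def e1 : Bc := ofC (1/2) * (1 + j)
/-- idempotent `e2 = (1-j)/2`. -/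
noncomputable def e2 : Bc := ofC (1/2) * (1 - j)

noncomputable def conj1 (w : Bc) : Bc := ⟨(starRingEnd ℂ) w.z1, (starRingEnd ℂ) w.z2⟩
def conj2 (w : Bc) : Bc := ⟨w.z1, -w.z2⟩
noncomputable def conj3 (w : Bc) : Bc := ⟨(starRingEnd ℂ) w.z1, -((starRingEnd ℂ) w.z2)⟩

/-- first idempotent component -/
def pi1 (w : Bc) : ℂ := w.z1 - w.z2 * Complex.I
/-- second idempotent component -/
def pi2 (w : Bc) : ℂ := w.z1 + w.z2 * Complex.I

noncomputable def mod1 (w : Bc) : ℝ := Real.sqrt ‖w.z1 ^ 2 + w.z2 ^ 2‖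
noncomputable def norm3 (w : Bc) : ℝ := Real.sqrt (‖w.z1‖ ^ 2 + ‖w.z2‖ ^ 2)

end Bc


open Bc

/-- Free `Bc`-module of rank `n` with the canonical basis. -/
abbrev M (n : ℕ) := Fin n → Bc

/-- The associated complex vector space `V`: elements with coordinates in `ℂ(i1)`. -/
def Vset (n : ℕ) : Set (M n) := {X | ∀ l, (X l).z2 = 0}

/-- First idempotent projection `P₁ : M → V`. -/
def P1 {n : ℕ} (X : M n) : M n := fun l => ofC (pi1 (X l))
/-- Second idempotent projection `P₂ : M → V`. -/
def P2 {n : ℕ} (X : M n) : M n := fun l => ofC (pi2 (X l))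

/-- Norm on `V` induced by the scalar product. -/
noncomputable def nrmV {n : ℕ} (ip : M n → M n → Bc) (X : M n) : ℝ :=
  Real.sqrt ((ip X X).z1.re)

/-- Norm on `M`: `‖X‖ = |e1·‖X₁‖ + e2·‖X₂‖|₃`. -/
noncomputable def nrm {n : ℕ} (ip : M n → M n → Bc) (X : M n) : ℝ :=
  norm3 (ofC ((nrmV ip (P1 X) : ℝ) : ℂ) * e1 + ofC ((nrmV ip (P2 X) : ℝ) : ℂ) * e2)


namespace BcAux

open Bc Complex

lemma e1_eq : e1 = ⟨1/2, Complex.I/2⟩ := by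
  simp [e1, ofC, j, i1, i2]; ring

lemma e2_eq : e2 = ⟨1/2, -(Complex.I/2)⟩ := by
  rw [e2, sub_eq_add_neg]; simp [ofC, j, i1, i2]; ring

lemma e1_sq : e1 * e1 = e1 := by
  rw [e1_eq]; ext <;> apply Complex.ext <;>
    simp [Complex.div_re, Complex.div_im, Complex.normSq] <;> norm_num

lemma e2_sq : e2 * e2 = e2 := by
  rw [e2_eq]; ext <;> apply Complex.ext <;>
    simp [Complex.div_re, Complex.div_im, Complex.normSq] <;> norm_num

lemma e1_mul_e2 : e1 * e2 = 0 := by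
  rw [e1_eq, e2_eq]; ext <;> apply Complex.ext <;>
    simp [Complex.div_re, Complex.div_im, Complex.normSq] <;> norm_num

lemma e1_add_e2 : e1 + e2 = 1 := by
  rw [e1_eq, e2_eq]; ext <;> apply Complex.ext <;> simp <;> norm_num

lemma conj3_e1 : conj3 e1 = e1 := by
  rw [e1_eq]; simp [conj3, map_div₀, Complex.conj_I, Complex.conj_ofNat]; ring

lemma conj3_e2 : conj3 e2 = e2 := by
  rw [e2_eq]; simp [conj3, map_div₀, Complex.conj_I, Complex.conj_ofNat]; ring

lemma conj3_add (a b : Bc) : conj3 (a + b) = conj3 a + conj3 b := by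
  ext <;> simp [conj3] <;> ring

lemma conj3_mul (a b : Bc) : conj3 (a * b) = conj3 a * conj3 b := by
  ext <;> simp [conj3] <;> ring

lemma pi1_add (a b : Bc) : pi1 (a + b) = pi1 a + pi1 b := by
  simp [pi1]; ring

lemma pi2_add (a b : Bc) : pi2 (a + b) = pi2 a + pi2 b := by
  simp [pi2]; ring

lemma pi1_mul (a b : Bc) : pi1 (a * b) = pi1 a * pi1 b := by
  simp only [mul_def, pi1]
  apply Complex.ext <;> simp <;> ring

lemma pi2_mul (a b : Bc) : pi2 (a * b) = pi2 a * pi2 b := by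
  simp only [mul_def, pi2]
  apply Complex.ext <;> simp <;> ring

lemma pi1_ofC (z : ℂ) : pi1 (ofC z) = z := by simp [pi1, ofC]

lemma pi2_ofC (z : ℂ) : pi2 (ofC z) = z := by simp [pi2, ofC]

lemma pi1_e1 : pi1 e1 = 1 := by
  rw [e1_eq]; unfold pi1
  apply Complex.ext <;>
    simp [Complex.div_re, Complex.div_im, Complex.normSq] <;> norm_num

lemma pi1_e2 : pi1 e2 = 0 := by
  rw [e2_eq]; unfold pi1
  apply Complex.ext <;>
    simp [Complex.div_re, Complex.div_im, Complex.normSq] <;> norm_num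

lemma pi2_e1 : pi2 e1 = 0 := by
  rw [e1_eq]; unfold pi2
  apply Complex.ext <;>
    simp [Complex.div_re, Complex.div_im, Complex.normSq] <;> norm_num

lemma pi2_e2 : pi2 e2 = 1 := by
  rw [e2_eq]; unfold pi2
  apply Complex.ext <;>
    simp [Complex.div_re, Complex.div_im, Complex.normSq] <;> norm_num

lemma pi1_conj3 (w : Bc) : pi1 (conj3 w) = (starRingEnd ℂ) (pi1 w) := by
  simp [pi1, conj3, map_sub, map_mul, Complex.conj_I]

lemma pi2_conj3 (w : Bc) : pi2 (conj3 w) = (starRingEnd ℂ) (pi2 w) := by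
  simp [pi2, conj3, map_add, map_mul, Complex.conj_I]

lemma decomp_self (w : Bc) : e1 * ofC (pi1 w) + e2 * ofC (pi2 w) = w := by
  rw [e1_eq, e2_eq]
  ext <;> apply Complex.ext <;>
    simp [ofC, pi1, pi2, Complex.div_re, Complex.div_im, Complex.normSq] <;> ring

lemma norm3_pi (w : Bc) :
    norm3 w = Real.sqrt ((‖pi1 w‖ ^ 2 + ‖pi2 w‖ ^ 2) / 2) := by
  unfold norm3
  congr 1
  simp [pi1, pi2, Complex.sq_norm, Complex.normSq_apply, Complex.sub_re, Complex.sub_im,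
    Complex.add_re, Complex.add_im, Complex.mul_re, Complex.mul_im]
  ring



lemma cs_aux {n : ℕ} (f : M n → M n → ℂ)
    (hadd : ∀ X Y Z : M n, f X (Y + Z) = f X Y + f X Z)
    (hsmul : ∀ (z : ℂ) (X Y : M n), f X ((ofC z) • Y) = z * f X Y)
    (hconj : ∀ X Y : M n, f X Y = (starRingEnd ℂ) (f Y X))
    (hpos : ∀ X : M n, 0 ≤ (f X X).re ∧ (f X X).im = 0) :
    ∀ X Y : M n, ‖f X Y‖ ^ 2 ≤ (f X X).re * (f Y Y).re := by
  intro X Y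
  have hA : 0 ≤ (f X X).re := (hpos X).1
  have hC : 0 ≤ (f Y Y).re := (hpos Y).1
  have hXX : f X X = ((f X X).re : ℂ) :=
    Complex.ext rfl (by simpa using (hpos X).2)
  have hYY : f Y Y = ((f Y Y).re : ℂ) :=
    Complex.ext rfl (by simpa using (hpos Y).2)
  set A : ℝ := (f X X).re with hAdef
  set C : ℝ := (f Y Y).re with hCdef
  set B : ℂ := f X Y with hB
  have hBYX : f Y X = (starRingEnd ℂ) B := by
    rw [hconj Y X, ← hB]
  have key : ∀ s : ℝ,
      0 ≤ (Complex.normSq B * C) * (s * s) + (-(2 * Complex.normSq B)) * s + A := by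
    intro s
    set t : ℂ := -(s : ℂ) * (starRingEnd ℂ) B with ht
    have h1 : f (X + ofC t • Y) X = (A : ℂ) + (starRingEnd ℂ) t * (starRingEnd ℂ) B := by
      rw [hconj _ X, hadd, hsmul, map_add, map_mul, hXX, Complex.conj_ofReal, ← hB]
    have h2 : f (X + ofC t • Y) Y = B + (starRingEnd ℂ) t * (C : ℂ) := by
      rw [hconj _ Y, hadd, hsmul, map_add, map_mul, hBYX, Complex.conj_conj, hYY,
        Complex.conj_ofReal]
    have expand : f (X + ofC t • Y) (X + ofC t • Y)
        = ((A - 2 * s * Complex.normSq B + s ^ 2 * Complex.normSq B * C : ℝ) : ℂ) := by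
      rw [hadd, hsmul, h1, h2]
      simp only [ht, map_mul, map_neg, Complex.conj_conj, Complex.conj_ofReal]
      push_cast
      linear_combination ((-2 * (s : ℂ) + (s : ℂ) ^ 2 * (C : ℂ))) * Complex.mul_conj B
    have H := (hpos (X + ofC t • Y)).1
    rw [expand, Complex.ofReal_re] at H
    nlinarith [H]
  have hd := discrim_le_zero key
  rw [discrim] at hd
  rw [Complex.sq_norm]
  rcases eq_or_ne B 0 with hB0 | hB0
  · rw [hB0]; simpa using mul_nonneg hA hC
  · have hpos' : 0 < Complex.normSq B := Complex.normSq_pos.mpr hB0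
    nlinarith [hd, hpos']


lemma norm3_ofC_pair (c d : ℝ) (hc : 0 ≤ c) (hd : 0 ≤ d) :
    norm3 (ofC (c : ℂ) * e1 + ofC (d : ℂ) * e2) = Real.sqrt ((c ^ 2 + d ^ 2) / 2) := by
  rw [norm3_pi]
  congr 1
  rw [pi1_add, pi1_mul, pi1_mul, pi1_ofC, pi1_ofC, pi1_e1, pi1_e2,
    pi2_add, pi2_mul, pi2_mul, pi2_ofC, pi2_ofC, pi2_e1, pi2_e2]
  simp [Complex.norm_real, _root_.abs_of_nonneg hc, _root_.abs_of_nonneg hd]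

lemma X_decomp {n : ℕ} (X : M n) : X = e1 • P1 X + e2 • P2 X := by
  funext l
  have h := decomp_self (X l)
  simp only [Pi.add_apply, Pi.smul_apply, smul_eq_mul, P1, P2]
  exact h.symm

end BcAux

open BcAux

/-- Bicomplex Schwarz inequality:
`|(X,Y)| ≤ |e1‖X₁‖‖Y₁‖ + e2‖X₂‖‖Y₂‖| ≤ √2 ‖X‖ ‖Y‖`. -/
theorem bicomplex_schwarz_inequality (n : ℕ) (ip : M n → M n → Bc)
    (h_add : ∀ X Y₁ Y₂ : M n, ip X (Y₁ + Y₂) = ip X Y₁ + ip X Y₂)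
    (h_smul : ∀ (α : Bc) (X Y : M n), ip X (α • Y) = α * ip X Y)
    (h_conj : ∀ X Y : M n, ip X Y = conj3 (ip Y X))
    (h_def : ∀ X : M n, ip X X = 0 ↔ X = 0)
    (h_closed : ∀ X Y : M n, X ∈ Vset n → Y ∈ Vset n → (ip X Y).z2 = 0)
    (h_pos : ∀ X : M n, ∃ a b : ℝ, 0 ≤ a ∧ 0 ≤ b ∧
      ip X X = ofC (a : ℂ) * e1 + ofC (b : ℂ) * e2) :
    ∀ X Y : M n,
      norm3 (ip X Y) ≤
        norm3 (ofC ((nrmV ip (P1 X) * nrmV ip (P1 Y) : ℝ) : ℂ) * e1 +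
               ofC ((nrmV ip (P2 X) * nrmV ip (P2 Y) : ℝ) : ℂ) * e2) ∧
      norm3 (ofC ((nrmV ip (P1 X) * nrmV ip (P1 Y) : ℝ) : ℂ) * e1 +
             ofC ((nrmV ip (P2 X) * nrmV ip (P2 Y) : ℝ) : ℂ) * e2) ≤
        Real.sqrt 2 * nrm ip X * nrm ip Y := by
  have hadd1 : ∀ X Y Z : M n, ip (X + Y) Z = ip X Z + ip Y Z := by
    intro X Y Z
    rw [h_conj (X + Y) Z, h_add, conj3_add, ← h_conj, ← h_conj]
  have hsmul1 : ∀ (α : Bc) (X Z : M n), ip (α • X) Z = conj3 α * ip X Z := by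
    intro α X Z
    rw [h_conj (α • X) Z, h_smul, conj3_mul, ← h_conj]
  have hdec : ∀ X Y : M n, ip X Y = e1 * ip (P1 X) (P1 Y) + e2 * ip (P2 X) (P2 Y) := by
    intro X Y
    conv_lhs => rw [X_decomp X, X_decomp Y]
    rw [h_add, h_smul, h_smul, hadd1, hadd1, hsmul1, hsmul1, hsmul1, hsmul1,
      conj3_e1, conj3_e2]
    linear_combination (ip (P1 X) (P1 Y)) * e1_sq
      + (ip (P2 X) (P1 Y) + ip (P1 X) (P2 Y)) * e1_mul_e2
      + (ip (P2 X) (P2 Y)) * e2_sq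
  have hreal : ∀ Z : M n, Z ∈ Vset n → ∃ a : ℝ, 0 ≤ a ∧ ip Z Z = ofC (a : ℂ) := by
    intro Z hZ
    obtain ⟨a, b, ha, hb, hab⟩ := h_pos Z
    have hz2 : (ip Z Z).z2 = 0 := h_closed Z Z hZ hZ
    rw [hab, e1_eq, e2_eq] at hz2
    simp [ofC] at hz2
    have hIC : ((a : ℂ) - b) * Complex.I = 0 := by linear_combination 2 * hz2
    have hab2 : a = b := by
      rcases mul_eq_zero.mp hIC with h | h
      · exact_mod_cast sub_eq_zero.mp (by exact_mod_cast h)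
      · exact absurd h Complex.I_ne_zero
    refine ⟨a, ha, ?_⟩
    rw [hab, ← hab2, ← mul_add, e1_add_e2, mul_one]
  intro X Y
  have hV1 : ∀ W : M n, P1 W ∈ Vset n := fun W l => rfl
  have hV2 : ∀ W : M n, P2 W ∈ Vset n := fun W l => rfl
  obtain ⟨α, hα, hPX1⟩ := hreal (P1 X) (hV1 X)
  obtain ⟨β, hβ, hPY1⟩ := hreal (P1 Y) (hV1 Y)
  obtain ⟨γ, hγ, hPX2⟩ := hreal (P2 X) (hV2 X)
  obtain ⟨δ, hδ, hPY2⟩ := hreal (P2 Y) (hV2 Y)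
  have ha1 : nrmV ip (P1 X) = Real.sqrt α := by simp [nrmV, hPX1, ofC]
  have hb1 : nrmV ip (P1 Y) = Real.sqrt β := by simp [nrmV, hPY1, ofC]
  have ha2 : nrmV ip (P2 X) = Real.sqrt γ := by simp [nrmV, hPX2, ofC]
  have hb2 : nrmV ip (P2 Y) = Real.sqrt δ := by simp [nrmV, hPY2, ofC]
  have cs1 := cs_aux (fun U V => pi1 (ip U V))
    (fun U V W => by rw [h_add, pi1_add])
    (fun z U V => by rw [h_smul, pi1_mul, pi1_ofC])
    (fun U V => by rw [h_conj U V, pi1_conj3])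
    (fun U => by
      obtain ⟨a, b, ha, hb, hab⟩ := h_pos U
      rw [hab, pi1_add, pi1_mul, pi1_mul, pi1_ofC, pi1_ofC, pi1_e1, pi1_e2]
      simp [ha])
    (P1 X) (P1 Y)
  have cs2 := cs_aux (fun U V => pi2 (ip U V))
    (fun U V W => by rw [h_add, pi2_add])
    (fun z U V => by rw [h_smul, pi2_mul, pi2_ofC])
    (fun U V => by rw [h_conj U V, pi2_conj3])
    (fun U => by
      obtain ⟨a, b, ha, hb, hab⟩ := h_pos U
      rw [hab, pi2_add, pi2_mul, pi2_mul, pi2_ofC, pi2_ofC, pi2_e1, pi2_e2]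
      simp [hb])
    (P2 X) (P2 Y)
  simp only [hPX1, hPY1, pi1_ofC, Complex.ofReal_re] at cs1
  simp only [hPX2, hPY2, pi2_ofC, Complex.ofReal_re] at cs2
  have hpi1 : pi1 (ip X Y) = pi1 (ip (P1 X) (P1 Y)) := by
    rw [hdec X Y, pi1_add, pi1_mul, pi1_mul, pi1_e1, pi1_e2]; ring
  have hpi2 : pi2 (ip X Y) = pi2 (ip (P2 X) (P2 Y)) := by
    rw [hdec X Y, pi2_add, pi2_mul, pi2_mul, pi2_e1, pi2_e2]; ring
  have hn1 : 0 ≤ nrmV ip (P1 X) := by rw [ha1]; positivity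
  have hn2 : 0 ≤ nrmV ip (P2 X) := by rw [ha2]; positivity
  have hm1 : 0 ≤ nrmV ip (P1 Y) := by rw [hb1]; positivity
  have hm2 : 0 ≤ nrmV ip (P2 Y) := by rw [hb2]; positivity
  have key1 : ‖pi1 (ip X Y)‖ ^ 2 ≤ (nrmV ip (P1 X) * nrmV ip (P1 Y)) ^ 2 := by
    rw [hpi1, ha1, hb1, mul_pow, Real.sq_sqrt hα, Real.sq_sqrt hβ]
    exact cs1
  have key2 : ‖pi2 (ip X Y)‖ ^ 2 ≤ (nrmV ip (P2 X) * nrmV ip (P2 Y)) ^ 2 := by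
    rw [hpi2, ha2, hb2, mul_pow, Real.sq_sqrt hγ, Real.sq_sqrt hδ]
    exact cs2
  constructor
  · rw [norm3_pi (ip X Y),
      norm3_ofC_pair _ _ (mul_nonneg hn1 hm1) (mul_nonneg hn2 hm2)]
    apply Real.sqrt_le_sqrt
    have h1 := key1
    have h2 := key2
    linarith
  · rw [norm3_ofC_pair _ _ (mul_nonneg hn1 hm1) (mul_nonneg hn2 hm2)]
    rw [nrm, nrm, norm3_ofC_pair _ _ hn1 hn2, norm3_ofC_pair _ _ hm1 hm2]
    rw [← Real.sqrt_mul (by norm_num : (0:ℝ) ≤ 2), ← Real.sqrt_mul (by positivity)]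
    apply Real.sqrt_le_sqrt
    nlinarith [sq_nonneg (nrmV ip (P1 X) * nrmV ip (P2 Y)),
      sq_nonneg (nrmV ip (P2 X) * nrmV ip (P1 Y)),
      mul_nonneg hn1 hm1, mul_nonneg hn2 hm2]
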